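/- Let R be an n×n Hermitian positive definite matrix and B ∈ ℂ^{n×m} with rank m. Then Γ = (B* R⁻¹ B)⁻¹ B* R⁻¹ satisfies Γ B = I_m, and for every X ∈ ℂ^{m×n} with X B = I_m one has X R X* ⪰ (B* R⁻¹ B)⁻¹ in the Loewner order, with equality exactly when X = Γ. In particular the Loewner-minimal value of Γ R Γ* subject to Γ B = I_m is Ω = (B* R⁻¹ B)⁻¹, which is positive definite. -/

import Mathlib

/-!
Put `S = Bᴴ R⁻¹ B` and `Γ = S⁻¹ Bᴴ R⁻¹`. Since `R Γᴴ = B S⁻¹`, every `X` with `X B = 1` satisfies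
`X R Γᴴ = S⁻¹`; expanding `Δ = X - Γ` then gives `X R Xᴴ = S⁻¹ + Δ R Δᴴ`. The second summand is
positive semidefinite and, `R` being positive definite, vanishes only for `Δ = 0`.
-/

open Matrix ComplexOrder

namespace Matrix

variable {𝕜 : Type*} [RCLike 𝕜] {ι κ μ : Type*} [Fintype κ]

theorem mulVec_injective_of_rank_eq_card {K : Type*} [Field K] {B : Matrix ι κ K}
    (hB : B.rank = Fintype.card κ) : Function.Injective B.mulVec := by
  have hker : Module.finrank K (LinearMap.ker B.mulVecLin) = 0 := by
    have h := LinearMap.finrank_range_add_finrank_ker B.mulVecLin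
    rw [Module.finrank_fintype_fun_eq_card] at h
    have hrange : Module.finrank K (LinearMap.range B.mulVecLin) = Fintype.card κ := hB
    omega
  rw [← coe_mulVecLin, ← LinearMap.ker_eq_bot]
  exact Submodule.finrank_eq_zero.mp hker

variable [Fintype ι]

theorem PosSemidef.mul_mul_conjTranspose_eq_zero_iff {A : Matrix ι ι 𝕜} (hA : A.PosSemidef)
    (X : Matrix μ ι 𝕜) : X * A * Xᴴ = 0 ↔ X * A = 0 := by
  classical
  open scoped MatrixOrder in
  obtain ⟨C, rfl⟩ := CStarAlgebra.nonneg_iff_eq_star_mul_self.mp hA.nonneg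
  refine ⟨fun h ↦ ?_, fun h ↦ by rw [h, Matrix.zero_mul]⟩
  have hXC : X * Cᴴ = 0 := by
    rw [← self_mul_conjTranspose_eq_zero, conjTranspose_mul, conjTranspose_conjTranspose]
    simpa only [star_eq_conjTranspose, Matrix.mul_assoc] using h
  rw [star_eq_conjTranspose, ← Matrix.mul_assoc, hXC, Matrix.zero_mul]

theorem PosDef.mul_mul_conjTranspose_eq_zero_iff [DecidableEq ι] {A : Matrix ι ι 𝕜}
    (hA : A.PosDef) (X : Matrix μ ι 𝕜) : X * A * Xᴴ = 0 ↔ X = 0 := by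
  rw [hA.posSemidef.mul_mul_conjTranspose_eq_zero_iff]
  refine ⟨fun h ↦ ?_, fun h ↦ by rw [h, Matrix.zero_mul]⟩
  rw [← Matrix.mul_one X, ← mul_nonsing_inv A ((isUnit_iff_isUnit_det A).mp hA.isUnit),
    ← Matrix.mul_assoc, h, Matrix.zero_mul]

variable [DecidableEq ι] [DecidableEq κ]

noncomputable def glsLeftInv (R : Matrix ι ι 𝕜) (B : Matrix ι κ 𝕜) : Matrix κ ι 𝕜 :=
  (Bᴴ * R⁻¹ * B)⁻¹ * (Bᴴ * R⁻¹)

variable {R : Matrix ι ι 𝕜} {B : Matrix ι κ 𝕜}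

theorem glsLeftInv_mul_self (hS : IsUnit (Bᴴ * R⁻¹ * B).det) : glsLeftInv R B * B = 1 := by
  rw [glsLeftInv, Matrix.mul_assoc, nonsing_inv_mul _ hS]

theorem mul_mul_conjTranspose_glsLeftInv (hR : R.IsHermitian) (hRdet : IsUnit R.det)
    {Y : Matrix κ ι 𝕜} (hY : Y * B = 1) :
    Y * R * (glsLeftInv R B)ᴴ = (Bᴴ * R⁻¹ * B)⁻¹ := by
  have hSinv : ((Bᴴ * R⁻¹ * B)⁻¹)ᴴ = (Bᴴ * R⁻¹ * B)⁻¹ :=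
    (isHermitian_conjTranspose_mul_mul B hR.inv).inv
  calc Y * R * (glsLeftInv R B)ᴴ = Y * (R * R⁻¹) * B * (Bᴴ * R⁻¹ * B)⁻¹ := by
        rw [glsLeftInv, conjTranspose_mul, conjTranspose_mul, hSinv, hR.inv.eq,
          conjTranspose_conjTranspose]
        simp only [Matrix.mul_assoc]
    _ = (Bᴴ * R⁻¹ * B)⁻¹ := by rw [mul_nonsing_inv _ hRdet, Matrix.mul_one, hY, Matrix.one_mul]

theorem mul_mul_conjTranspose_eq_add (hR : R.IsHermitian) (hRdet : IsUnit R.det)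
    (hS : IsUnit (Bᴴ * R⁻¹ * B).det) {X : Matrix κ ι 𝕜} (hX : X * B = 1) :
    X * R * Xᴴ = (Bᴴ * R⁻¹ * B)⁻¹ +
      (X - glsLeftInv R B) * R * (X - glsLeftInv R B)ᴴ := by
  set Γ := glsLeftInv R B
  have hXΓ : X * R * Γᴴ = (Bᴴ * R⁻¹ * B)⁻¹ := mul_mul_conjTranspose_glsLeftInv hR hRdet hX
  have hΓΓ : Γ * R * Γᴴ = (Bᴴ * R⁻¹ * B)⁻¹ :=
    mul_mul_conjTranspose_glsLeftInv hR hRdet (glsLeftInv_mul_self hS)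
  have hΓX : Γ * R * Xᴴ = (Bᴴ * R⁻¹ * B)⁻¹ := by
    have h := congrArg conjTranspose hXΓ
    rwa [conjTranspose_mul, conjTranspose_mul, conjTranspose_conjTranspose, hR.eq,
      (isHermitian_conjTranspose_mul_mul B hR.inv).inv.eq, ← Matrix.mul_assoc] at h
  simp only [conjTranspose_sub, Matrix.sub_mul, Matrix.mul_sub]
  rw [hXΓ, hΓΓ, hΓX]
  abel

end Matrix

/-- For `R > 0` and `B` of full column rank, `Γ = (B* R⁻¹ B)⁻¹ B* R⁻¹` is the
unique Loewner minimizer of `X R X*` subject to `X B = I`, with minimal value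
`Ω = (B* R⁻¹ B)⁻¹ > 0`. -/
theorem stmt_3 {n m : ℕ} (R : Matrix (Fin n) (Fin n) ℂ) (hR : R.PosDef)
    (B : Matrix (Fin n) (Fin m) ℂ) (hB : B.rank = m) :
    ((Bᴴ * R⁻¹ * B)⁻¹ * (Bᴴ * R⁻¹)) * B = 1 ∧
    (∀ X : Matrix (Fin m) (Fin n) ℂ, X * B = 1 →
      (X * R * Xᴴ - (Bᴴ * R⁻¹ * B)⁻¹).PosSemidef ∧
      (X * R * Xᴴ = (Bᴴ * R⁻¹ * B)⁻¹ ↔ X = (Bᴴ * R⁻¹ * B)⁻¹ * (Bᴴ * R⁻¹))) ∧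
    ((Bᴴ * R⁻¹ * B)⁻¹).PosDef := by
  have hS : (Bᴴ * R⁻¹ * B).PosDef :=
    hR.inv.conjTranspose_mul_mul_same (mulVec_injective_of_rank_eq_card (by simpa using hB))
  have hSdet : IsUnit (Bᴴ * R⁻¹ * B).det := (isUnit_iff_isUnit_det _).mp hS.isUnit
  have hRdet : IsUnit R.det := (isUnit_iff_isUnit_det _).mp hR.isUnit
  refine ⟨glsLeftInv_mul_self hSdet, fun X hX ↦ ?_, hS.inv⟩
  rw [mul_mul_conjTranspose_eq_add hR.isHermitian hRdet hSdet hX, add_sub_cancel_left,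
    add_eq_left, hR.mul_mul_conjTranspose_eq_zero_iff, sub_eq_zero]
  exact ⟨hR.posSemidef.mul_mul_conjTranspose_same _, Iff.rfl⟩
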